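/- Let G = C_n^m (the m-th power of the n-cycle) or G = P_n^m (the m-th power of the n-path), let i be a vertex and m+1 ≤ t ≤ n. If S is a legal dominating sequence of G whose self-footprinting set I_S satisfies I_S ∩ [i, i+t] = {i, i+t} (indices modulo n in the cycle case), then |Ŝ ∩ [i, i+t)| ≤ t − m. -/

import Mathlib

namespace GrundyDom

/-- Closed neighborhood N[v]. -/
def cn {V : Type*} (G : SimpleGraph V) (v : V) : Set V := insert v (G.neighborSet v)

/-- Union of closed neighborhoods of the vertices of a list. -/
def cnUnion {V : Type*} (G : SimpleGraph V) (L : List V) : Set V := ⋃ v ∈ L, cn G v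

/-- Private neighborhood of `v` with respect to the first `i` entries of `S`:
`N[v] \ (N[v_1] ∪ ... ∪ N[v_i])`. -/
def PN {V : Type*} (G : SimpleGraph V) (S : List V) (i : ℕ) (v : V) : Set V :=
  cn G v \ cnUnion G (S.take i)

/-- A legal dominating sequence: distinct vertices, dominating set, and every
vertex of the sequence has a nonempty private neighborhood w.r.t. its predecessors. -/
structure IsLegal {V : Type*} (G : SimpleGraph V) (S : List V) : Prop where
  nodup : S.Nodup
  dominates : ∀ v : V, ∃ u ∈ S, v ∈ cn G u
  legal : ∀ i : Fin S.length, (PN G S i.val (S.get i)).Nonempty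

/-- The set `I_S` of vertices that footprint themselves in `S`. -/
def selfFoot {V : Type*} (G : SimpleGraph V) (S : List V) : Set V :=
  {v | ∃ i : Fin S.length, S.get i = v ∧ v ∈ PN G S i.val v}

/-- Grundy domination number: maximum length of a legal dominating sequence. -/
noncomputable def gammaGr {V : Type*} (G : SimpleGraph V) : ℕ :=
  sSup {k | ∃ S : List V, IsLegal G S ∧ S.length = k}

/-- `γ_gr(G, I)`: maximum length of a legal dominating sequence `S` with `I_S = I`. -/
noncomputable def gammaGrOn {V : Type*} (G : SimpleGraph V) (I : Set V) : ℕ :=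
  sSup {k | ∃ S : List V, IsLegal G S ∧ selfFoot G S = I ∧ S.length = k}

/-- `γ_gr^u(G)`: maximum of `γ_gr(G, I)` over independent sets `I` containing `u`. -/
noncomputable def gammaGrVert {V : Type*} (G : SimpleGraph V) (u : V) : ℕ :=
  sSup {k | ∃ I : Set V, (∀ ⦃a⦄, a ∈ I → ∀ ⦃b⦄, b ∈ I → a ≠ b → ¬ G.Adj a b) ∧
    u ∈ I ∧ k = gammaGrOn G I}

/-- Independent set of a graph. -/
def IsIndep {V : Type*} (G : SimpleGraph V) (I : Set V) : Prop :=
  ∀ ⦃u⦄, u ∈ I → ∀ ⦃v⦄, v ∈ I → u ≠ v → ¬ G.Adj u v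

/-- The X-join product `G ↩ 𝓡`: replace each vertex `v` of `G` by the graph `R v`. -/
def XJoin {V : Type*} (G : SimpleGraph V) {W : V → Type*} (R : ∀ v, SimpleGraph (W v)) :
    SimpleGraph (Σ v, W v) where
  Adj x y := G.Adj x.1 y.1 ∨ ∃ h : x.1 = y.1, (R y.1).Adj (h ▸ x.2) y.2
  symm := by
    constructor
    rintro ⟨a, xa⟩ ⟨b, yb⟩ (h | ⟨h, hadj⟩)
    · exact Or.inl h.symm
    · dsimp at h hadj
      subst h
      exact Or.inr ⟨rfl, (R a).adj_symm hadj⟩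
  loopless := by
    constructor
    rintro ⟨a, xa⟩ (h | ⟨h, hadj⟩)
    · exact G.irrefl h
    · exact (R a).irrefl hadj

/-- The lexicographic product `G ∘ H`. -/
def Lex {V W : Type*} (G : SimpleGraph V) (H : SimpleGraph W) : SimpleGraph (V × W) where
  Adj x y := G.Adj x.1 y.1 ∨ (x.1 = y.1 ∧ H.Adj x.2 y.2)
  symm := by
    constructor
    rintro x y (h | ⟨h1, h2⟩)
    · exact Or.inl h.symm
    · exact Or.inr ⟨h1.symm, h2.symm⟩
  loopless := by
    constructor
    rintro x (h | ⟨_, h⟩)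
    · exact G.irrefl h
    · exact H.irrefl h

/-- The replacement graph `G_{u ↩ H}`: replace the vertex `u` of `G` by `H`. -/
def Replace {V : Type*} (G : SimpleGraph V) (u : V) {W : Type*} (H : SimpleGraph W) :
    SimpleGraph ({v : V // v ≠ u} ⊕ W) where
  Adj x y :=
    match x, y with
    | Sum.inl a, Sum.inl b => G.Adj a.1 b.1
    | Sum.inl a, Sum.inr _ => G.Adj a.1 u
    | Sum.inr _, Sum.inl b => G.Adj u b.1
    | Sum.inr h1, Sum.inr h2 => H.Adj h1 h2
  symm := by constructor; rintro (a|a) (b|b) h <;> exact h.symm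
  loopless := by constructor; rintro (a|a) h <;> exact h.ne rfl

/-- `C_n^m`: the m-th power of the n-cycle, on vertex set `ZMod n`;
two vertices are adjacent iff their circular distance is between 1 and m. -/
def cyclePow (n m : ℕ) : SimpleGraph (ZMod n) where
  Adj i j := i ≠ j ∧ ∃ k : ℕ, 1 ≤ k ∧ k ≤ m ∧ (j = i + k ∨ i = j + k)
  symm := by
    constructor
    rintro i j ⟨hne, k, h1, h2, h3⟩
    exact ⟨hne.symm, k, h1, h2, h3.symm⟩
  loopless := ⟨fun i h => h.1 rfl⟩

/-- `P_n^m`: the m-th power of the n-path, on vertex set `Fin n`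
(vertex `i` represents the `(i+1)`-st vertex of the path);
two vertices adjacent iff their distance is between 1 and m. -/
def pathPow (n m : ℕ) : SimpleGraph (Fin n) where
  Adj i j := i ≠ j ∧ Nat.dist i.val j.val ≤ m
  symm := by
    constructor
    rintro i j ⟨hne, hd⟩
    exact ⟨hne.symm, by rwa [Nat.dist_comm]⟩
  loopless := ⟨fun i h => h.1 rfl⟩

end GrundyDom

/-!
Let `w` be the vertex of the window `[i, i + t]` that `S` plays last. If `w = i`, every other
played window vertex precedes `i`; as `i` footprints itself, none of `i + 1, …, i + m` is played,
so at most `t - m` vertices of `[i, i + t)` are. The case `w = i + t` is symmetric. Otherwise `w`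
is an inner vertex, which does not footprint itself, so it has a private neighbour `x ≠ w`. If more
than `t - m` vertices of `[i, i + t)` were played, fewer than `m` are missing there, so every
window vertex lies within distance `m` of a played window vertex other than `w`, and a neighbour
of `w` outside the window is a neighbour of an end. Either way `x` was dominated before `w`.
-/

namespace GrundyDom

open Finset

section ClosedNeighborhood

variable {V : Type*} {G : SimpleGraph V} {u v : V}

lemma self_mem_cn : v ∈ cn G v := Set.mem_insert v _

lemma mem_cn_comm : v ∈ cn G u ↔ u ∈ cn G v := by
  simp only [cn, Set.mem_insert_iff, SimpleGraph.mem_neighborSet, G.adj_comm u v, eq_comm]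

end ClosedNeighborhood

section LegalSequence

variable {V : Type*} [DecidableEq V] {G : SimpleGraph V} {S : List V} {v x : V}

lemma mem_cnUnion_take_idxOf :
    x ∈ cnUnion G (S.take (S.idxOf v)) ↔ ∃ u ∈ S, S.idxOf u < S.idxOf v ∧ x ∈ cn G u := by
  simp only [cnUnion, Set.mem_iUnion, exists_prop]
  constructor
  · rintro ⟨u, hu, hx⟩
    have huS := List.mem_of_mem_take hu
    exact ⟨u, huS, (List.mem_take_iff_idxOf_lt huS).1 hu, hx⟩
  · rintro ⟨u, huS, hlt, hx⟩
    exact ⟨u, (List.mem_take_iff_idxOf_lt huS).2 hlt, hx⟩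

lemma mem_selfFoot_iff (hS : S.Nodup) :
    v ∈ selfFoot G S ↔ v ∈ S ∧ ∀ u ∈ S, S.idxOf u < S.idxOf v → v ∉ cn G u := by
  simp only [selfFoot, PN, Set.mem_sdiff, List.get_eq_getElem]
  constructor
  · rintro ⟨i, rfl, -, hpriv⟩
    have htake := mem_cnUnion_take_idxOf (G := G) (S := S) (v := S[i.1]) (x := S[i.1])
    rw [hS.idxOf_getElem] at htake ⊢
    exact ⟨List.getElem_mem _, fun u hu hlt hvu => hpriv (htake.2 ⟨u, hu, hlt, hvu⟩)⟩
  · rintro ⟨hv, hpriv⟩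
    refine ⟨⟨S.idxOf v, List.idxOf_lt_length_of_mem hv⟩, List.getElem_idxOf _, self_mem_cn, ?_⟩
    rintro hvS
    obtain ⟨u, hu, hlt, hvu⟩ := mem_cnUnion_take_idxOf.1 hvS
    exact hpriv u hu hlt hvu

lemma IsLegal.exists_private (hS : IsLegal G S) (hv : v ∈ S) :
    ∃ x ∈ cn G v, ∀ u ∈ S, S.idxOf u < S.idxOf v → x ∉ cn G u := by
  obtain ⟨x, hx, hpriv⟩ := hS.legal ⟨S.idxOf v, List.idxOf_lt_length_of_mem hv⟩
  simp only [List.get_eq_getElem, List.getElem_idxOf, mem_cnUnion_take_idxOf] at hx hpriv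
  exact ⟨x, hx, fun u hu hlt hxu => hpriv ⟨u, hu, hlt, hxu⟩⟩

end LegalSequence

section Counting

variable {p : ℕ → Prop} [DecidablePred p] {a m t : ℕ}

lemma card_filter_range_le_of_forall_Ico (hat : a + m ≤ t) (hp : ∀ s ∈ Ico a (a + m), ¬ p s) :
    ((range t).filter p).card ≤ t - m := by
  have hsub : (range t).filter p ⊆ range t \ Ico a (a + m) := fun s hs => by
    rw [mem_filter] at hs
    exact mem_sdiff.2 ⟨hs.1, fun h => hp s h hs.2⟩
  have hIco : Ico a (a + m) ⊆ range t := fun s hs => by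
    rw [mem_Ico] at hs
    exact mem_range.2 (by omega)
  calc ((range t).filter p).card ≤ (range t \ Ico a (a + m)).card := card_le_card hsub
    _ = t - m := by
      rw [card_sdiff_of_subset hIco, card_range, Nat.card_Ico, Nat.add_sub_cancel_left]

lemma exists_around_of_card_filter_gt (hp0 : p 0) (hpt : p t)
    (hcard : t - m < ((range t).filter p).card) {s : ℕ} (hst : s ≤ t) (hs : ¬ p s) :
    ∃ a b, p a ∧ p b ∧ a < s ∧ s < b ∧ b ≤ t ∧ b ≤ a + m := by
  have hs0 : 0 < s := Nat.pos_of_ne_zero fun h => hs (h ▸ hp0)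
  have hst' : s < t := lt_of_le_of_ne hst fun h => hs (h ▸ hpt)
  set L := (range s).filter p
  set R := (Ioc s t).filter p
  have hL : L.Nonempty := ⟨0, mem_filter.2 ⟨mem_range.2 hs0, hp0⟩⟩
  have hR : R.Nonempty := ⟨t, mem_filter.2 ⟨mem_Ioc.2 ⟨hst', le_rfl⟩, hpt⟩⟩
  obtain ⟨ha, hpa⟩ := mem_filter.1 (L.max'_mem hL)
  obtain ⟨hb, hpb⟩ := mem_filter.1 (R.min'_mem hR)
  rw [mem_range] at ha
  rw [mem_Ioc] at hb
  have hgap : Ioo (L.max' hL) (R.min' hR) ⊆ (range t).filter (¬ p ·) := fun x hx => by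
    rw [mem_Ioo] at hx
    refine mem_filter.2 ⟨mem_range.2 (by omega), fun hpx => ?_⟩
    rcases lt_or_ge x s with hxs | hxs
    · exact absurd (L.le_max' x (mem_filter.2 ⟨mem_range.2 hxs, hpx⟩)) (by omega)
    · have hxs' : s < x := lt_of_le_of_ne hxs fun h => hs (h ▸ hpx)
      exact absurd (R.min'_le x (mem_filter.2 ⟨mem_Ioc.2 ⟨hxs', by omega⟩, hpx⟩)) (by omega)
  have hsplit := card_filter_add_card_filter_not (s := range t) p
  have := card_le_card hgap
  rw [card_range] at hsplit
  rw [Nat.card_Ioo] at this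
  exact ⟨_, _, hpa, hpb, ha, hb.1, hb.2, by omega⟩

end Counting

/-- `f 0, …, f t` is a window of `G` on which `G` looks like the `m`-th power of a path: the two
ends may coincide (the whole cycle, `t = n`), and every neighbour of an inner vertex lying outside
the window is a neighbour of one of the ends. -/
structure IsPathPowSegment {V : Type*} (G : SimpleGraph V) (m t : ℕ) (f : ℕ → V) : Prop where
  injOn_Iio : Set.InjOn f (Set.Iio t)
  injOn_Ioc : Set.InjOn f (Set.Ioc 0 t)
  mem_cn : ∀ a b, a ≤ b → b ≤ t → b ≤ a + m → f b ∈ cn G (f a)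
  cn_subset : ∀ s ∈ Set.Ioo 0 t, cn G (f s) ⊆ f '' Set.Iic t ∪ cn G (f 0) ∪ cn G (f t)

namespace IsPathPowSegment

variable {V : Type*} {G : SimpleGraph V} {m t : ℕ} {f : ℕ → V}

lemma apply_ne_of_mem_Ioo (hf : IsPathPowSegment G m t f) {s q : ℕ} (hs : s ∈ Set.Ioo 0 t)
    (hq : q ≤ t) (hqs : q ≠ s) : f q ≠ f s := by
  rcases hq.lt_or_eq with hq | rfl
  · exact hf.injOn_Iio.ne hq hs.2 hqs
  · exact hf.injOn_Ioc.ne ⟨hs.1.trans hs.2, le_rfl⟩ ⟨hs.1, hs.2.le⟩ hqs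

lemma mem_cn_of_le_add (hf : IsPathPowSegment G m t f) {a b : ℕ} (ha : a ≤ t) (hb : b ≤ t)
    (hab : a ≤ b + m) (hba : b ≤ a + m) : f b ∈ cn G (f a) := by
  rcases le_total a b with h | h
  · exact hf.mem_cn a b h hb hba
  · exact mem_cn_comm.1 (hf.mem_cn b a h ha hab)

variable [DecidableEq V] {S : List V}

lemma exists_mem_cn_of_card_gt (hf : IsPathPowSegment G m t f) (h0 : f 0 ∈ S) (ht : f t ∈ S)
    (hcard : t - m < ((range t).filter (f · ∈ S)).card) {s : ℕ} (hs : s ∈ Set.Ioo 0 t) {x : V}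
    (hx : x ∈ cn G (f s)) (hxs : x ≠ f s) :
    ∃ q ≤ t, f q ∈ S ∧ f q ≠ f s ∧ x ∈ cn G (f q) := by
  rcases hf.cn_subset s hs hx with (⟨s', hs', rfl⟩ | hx0) | hxt
  · rw [Set.mem_Iic] at hs'
    by_cases hs'S : f s' ∈ S
    · exact ⟨s', hs', hs'S, hxs, self_mem_cn⟩
    obtain ⟨a, b, ha, hb, has', hs'b, hbt, hba⟩ :=
      exists_around_of_card_filter_gt (p := (f · ∈ S)) h0 ht hcard hs' hs'S
    by_cases has : a = s
    · exact ⟨b, hbt, hb, hf.apply_ne_of_mem_Ioo hs hbt (by omega),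
        hf.mem_cn_of_le_add hbt hs' (by omega) (by omega)⟩
    · exact ⟨a, by omega, ha, hf.apply_ne_of_mem_Ioo hs (by omega) has,
        hf.mem_cn_of_le_add (by omega) hs' (by omega) (by omega)⟩
  · exact ⟨0, Nat.zero_le _, h0, hf.apply_ne_of_mem_Ioo hs (Nat.zero_le _) hs.1.ne, hx0⟩
  · exact ⟨t, le_rfl, ht, hf.apply_ne_of_mem_Ioo hs le_rfl hs.2.ne', hxt⟩

lemma notMem_of_selfFoot_of_forall_idxOf_lt (hf : IsPathPowSegment G m t f) (hS : S.Nodup)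
    {e : ℕ} (he : e ≤ t) (hesf : f e ∈ selfFoot G S)
    (hlast : ∀ q ≤ t, f q ∈ S → f q ≠ f e → S.idxOf (f q) < S.idxOf (f e))
    {s : ℕ} (hs : s ≤ t) (hse : s ≤ e + m) (hes : e ≤ s + m) (hne : f s ≠ f e) : f s ∉ S :=
  fun hsS => ((mem_selfFoot_iff hS).1 hesf).2 _ hsS (hlast s hs hsS hne)
    (hf.mem_cn_of_le_add hs he hse hes)

lemma eq_end_of_forall_idxOf_lt (hf : IsPathPowSegment G m t f) (hS : IsLegal G S)
    (hI : selfFoot G S ∩ f '' Set.Iic t = {f 0, f t})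
    (hcard : t - m < ((range t).filter (f · ∈ S)).card) {s₀ : ℕ} (hs₀ : s₀ ≤ t) (hs₀S : f s₀ ∈ S)
    (hlast : ∀ q ≤ t, f q ∈ S → f q ≠ f s₀ → S.idxOf (f q) < S.idxOf (f s₀)) :
    f s₀ = f 0 ∨ f s₀ = f t := by
  by_contra! hne
  have hends : {f 0, f t} ⊆ selfFoot G S := hI ▸ Set.inter_subset_left
  have h0S : f 0 ∈ S := ((mem_selfFoot_iff hS.nodup).1 (hends (Set.mem_insert _ _))).1
  have htS : f t ∈ S := ((mem_selfFoot_iff hS.nodup).1 (hends (Set.mem_insert_of_mem _ rfl))).1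
  have hs₀' : s₀ ∈ Set.Ioo 0 t := ⟨Nat.pos_of_ne_zero (by rintro rfl; exact hne.1 rfl),
    hs₀.lt_of_ne (by rintro rfl; exact hne.2 rfl)⟩
  have hinner : f s₀ ∉ selfFoot G S := fun h => by
    have : f s₀ ∈ ({f 0, f t} : Set V) := hI ▸ ⟨h, s₀, hs₀, rfl⟩
    rcases this with h | h
    exacts [hne.1 h, hne.2 h]
  obtain ⟨x, hx, hpriv⟩ := hS.exists_private hs₀S
  have hxs : x ≠ f s₀ := by
    rintro rfl
    exact hinner ((mem_selfFoot_iff hS.nodup).2 ⟨hs₀S, hpriv⟩)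
  obtain ⟨q, hq, hqS, hqs, hxq⟩ := hf.exists_mem_cn_of_card_gt h0S htS hcard hs₀' hx hxs
  exact hpriv _ hqS (hlast q hq hqS hqs) hxq

theorem card_filter_mem_le (hf : IsPathPowSegment G m t f) (hS : IsLegal G S) (hmt : m < t)
    (hI : selfFoot G S ∩ f '' Set.Iic t = {f 0, f t}) :
    ((range t).filter (f · ∈ S)).card ≤ t - m := by
  have hends : {f 0, f t} ⊆ selfFoot G S := hI ▸ Set.inter_subset_left
  have h0S : f 0 ∈ S := ((mem_selfFoot_iff hS.nodup).1 (hends (Set.mem_insert _ _))).1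
  -- `f s₀` is the window vertex played last
  obtain ⟨s₀, hs₀, hmax⟩ := ((Iic t).filter (f · ∈ S)).exists_max_image
    (fun s => S.idxOf (f s)) ⟨0, mem_filter.2 ⟨mem_Iic.2 (Nat.zero_le t), h0S⟩⟩
  simp only [mem_filter, mem_Iic] at hs₀ hmax
  obtain ⟨hs₀, hs₀S⟩ := hs₀
  have hlast : ∀ q ≤ t, f q ∈ S → f q ≠ f s₀ → S.idxOf (f q) < S.idxOf (f s₀) :=
    fun q hq hqS hne => (hmax q ⟨hq, hqS⟩).lt_of_ne fun h => hne ((List.idxOf_inj hqS).1 h)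
  by_contra! hcard
  rcases hf.eq_end_of_forall_idxOf_lt hS hI hcard hs₀ hs₀S hlast with hl | hr
  · rw [hl] at hlast
    refine hcard.not_ge (card_filter_range_le_of_forall_Ico (a := 1) (by omega) fun s hs => ?_)
    rw [mem_Ico] at hs
    exact hf.notMem_of_selfFoot_of_forall_idxOf_lt hS.nodup (Nat.zero_le t)
      (hends (Set.mem_insert _ _)) hlast (by omega) (by omega) (by omega)
      (hf.injOn_Iio.ne (Set.mem_Iio.2 (by omega)) (Set.mem_Iio.2 (by omega)) (by omega))
  · rw [hr] at hlast
    refine hcard.not_ge (card_filter_range_le_of_forall_Ico (a := t - m) (by omega) fun s hs => ?_)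
    rw [mem_Ico] at hs
    exact hf.notMem_of_selfFoot_of_forall_idxOf_lt hS.nodup le_rfl
      (hends (Set.mem_insert_of_mem _ rfl)) hlast (by omega) (by omega) (by omega)
      (hf.injOn_Ioc.ne ⟨by omega, by omega⟩ ⟨by omega, le_rfl⟩ (by omega))

end IsPathPowSegment

section CyclePow

variable {n m t : ℕ}

lemma mem_cn_cyclePow_iff {u v : ZMod n} :
    v ∈ cn (cyclePow n m) u ↔ ∃ k ≤ m, v = u + k ∨ u = v + k := by
  simp only [cn, Set.mem_insert_iff, SimpleGraph.mem_neighborSet]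
  constructor
  · rintro (rfl | ⟨-, k, -, hk, h⟩)
    · exact ⟨0, Nat.zero_le m, by simp⟩
    · exact ⟨k, hk, h⟩
  · rintro ⟨k, hk, h⟩
    by_cases hvu : v = u
    · exact Or.inl hvu
    · refine Or.inr ⟨Ne.symm hvu, k, Nat.pos_of_ne_zero ?_, hk, h⟩
      rintro rfl
      simp only [Nat.cast_zero, add_zero] at h
      exact hvu (h.elim id Eq.symm)

lemma injOn_add_natCast (i : ZMod n) {s : Set ℕ} (hs : ∀ a ∈ s, ∀ b ∈ s, a < b + n) :
    Set.InjOn (fun a : ℕ => i + (a : ZMod n)) s := fun a ha b hb h =>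
  ((ZMod.natCast_eq_natCast_iff _ _ _).1 (add_left_cancel h)).eq_of_abs_lt
    (abs_sub_lt_iff.2 ⟨by have := hs b hb a ha; omega, by have := hs a ha b hb; omega⟩)

lemma isPathPowSegment_cyclePow (i : ZMod n) (htn : t ≤ n) :
    IsPathPowSegment (cyclePow n m) m t (fun s => i + s) where
  injOn_Iio := injOn_add_natCast i fun a ha b hb => by
    simp only [Set.mem_Iio] at ha hb; omega
  injOn_Ioc := injOn_add_natCast i fun a ha b hb => by
    simp only [Set.mem_Ioc] at ha hb; omega
  mem_cn a b hab _ hba := mem_cn_cyclePow_iff.2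
    ⟨b - a, by omega, Or.inl (by rw [Nat.cast_sub hab]; ring)⟩
  cn_subset s hs x hx := by
    obtain ⟨-, hst⟩ := hs
    obtain ⟨k, hk, h | h⟩ := mem_cn_cyclePow_iff.1 hx
    · by_cases hskt : s + k ≤ t
      · exact Or.inl (Or.inl ⟨s + k, hskt, by rw [h]; push_cast; ring⟩)
      · refine Or.inr (mem_cn_cyclePow_iff.2 ⟨s + k - t, by omega, Or.inl ?_⟩)
        rw [h, Nat.cast_sub (by omega)]
        push_cast
        ring
    · by_cases hks : k ≤ s
      · refine Or.inl (Or.inl ⟨s - k, by simp only [Set.mem_Iic]; omega, ?_⟩)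
        show i + ((s - k : ℕ) : ZMod n) = x
        rw [Nat.cast_sub hks]
        linear_combination h
      · refine Or.inl (Or.inr (mem_cn_cyclePow_iff.2 ⟨k - s, by omega, Or.inr ?_⟩))
        rw [Nat.cast_sub (by omega)]
        linear_combination h

theorem cyclePow_card_inter_image_le (ht : m < t) (htn : t ≤ n) (i : ZMod n)
    {S : List (ZMod n)} (hS : IsLegal (cyclePow n m) S)
    (hI : selfFoot (cyclePow n m) S ∩ ↑((range (t + 1)).image fun s : ℕ => i + (s : ZMod n))
      = {i, i + (t : ZMod n)}) :
    (S.toFinset ∩ (range t).image fun s : ℕ => i + (s : ZMod n)).card ≤ t - m := by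
  have hI' : selfFoot (cyclePow n m) S ∩ (fun s : ℕ => i + (s : ZMod n)) '' Set.Iic t
      = {i + ((0 : ℕ) : ZMod n), i + (t : ZMod n)} := by
    rw [Nat.cast_zero, add_zero, ← hI]
    congr 1
    ext
    simp
  rw [inter_comm, ← filter_mem_eq_inter, filter_image]
  simp only [List.mem_toFinset]
  exact card_image_le.trans ((isPathPowSegment_cyclePow i htn).card_filter_mem_le hS ht hI')

end CyclePow

section PathPow

variable {n m t : ℕ}

lemma mem_cn_pathPow_iff {u v : Fin n} :
    v ∈ cn (pathPow n m) u ↔ u.val ≤ v.val + m ∧ v.val ≤ u.val + m := by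
  change v = u ∨ (u ≠ v ∧ Nat.dist u v ≤ m) ↔ _
  rw [Fin.ext_iff, Ne, Fin.ext_iff]
  unfold Nat.dist
  omega

lemma isPathPowSegment_pathPow (i : Fin n) (hit : i.val + t < n) :
    IsPathPowSegment (pathPow n m) m t (fun s => ⟨min (i.val + s) (n - 1), by omega⟩) := by
  have hinj : Set.InjOn (fun s => (⟨min (i.val + s) (n - 1), by omega⟩ : Fin n)) (Set.Iic t) :=
    fun a ha b hb h => by
      simp only [Set.mem_Iic, Fin.mk.injEq] at ha hb h
      omega
  refine ⟨hinj.mono Set.Iio_subset_Iic_self, hinj.mono Set.Ioc_subset_Iic_self,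
    fun a b hab hbt hba => mem_cn_pathPow_iff.2 (by simp only; omega), fun s hs x hx => ?_⟩
  simp only [Set.mem_Ioo] at hs
  rw [mem_cn_pathPow_iff] at hx
  simp only at hx
  by_cases hxi : x.val < i.val
  · exact Or.inl (Or.inr (mem_cn_pathPow_iff.2 (by simp only; omega)))
  by_cases hxt : i.val + t < x.val
  · exact Or.inr (mem_cn_pathPow_iff.2 (by simp only; omega))
  exact Or.inl (Or.inl ⟨x.val - i.val, Set.mem_Iic.2 (by omega), Fin.ext (by simp only; omega)⟩)

theorem pathPow_card_filter_le (ht : m < t) (i : Fin n) (hit : i.val + t < n)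
    {S : List (Fin n)} (hS : IsLegal (pathPow n m) S)
    (hI : selfFoot (pathPow n m) S ∩ {j : Fin n | i.val ≤ j.val ∧ j.val ≤ i.val + t}
      = {j : Fin n | j = i ∨ j.val = i.val + t}) :
    (S.toFinset.filter fun j => i.val ≤ j.val ∧ j.val < i.val + t).card ≤ t - m := by
  set f : ℕ → Fin n := fun s => ⟨min (i.val + s) (n - 1), by omega⟩
  have hI' : selfFoot (pathPow n m) S ∩ f '' Set.Iic t = {f 0, f t} := by
    convert hI using 2 <;> ext j <;> simp only [f, Set.mem_image, Set.mem_Iic,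
      Set.mem_insert_iff, Set.mem_singleton_iff, Set.mem_ofPred_eq, Fin.ext_iff]
    · exact ⟨fun ⟨s, hs, hsj⟩ => by omega, fun hj => ⟨j.val - i.val, by omega, by omega⟩⟩
    · omega
  refine (card_le_card fun j hj => ?_).trans (card_image_le (f := f) |>.trans
    ((isPathPowSegment_pathPow i hit).card_filter_mem_le hS ht hI'))
  rw [mem_filter, List.mem_toFinset] at hj
  have hfj : f (j.val - i.val) = j := Fin.ext (by simp only [f]; omega)
  have hjS : f (j.val - i.val) ∈ S := by rw [hfj]; exact hj.1
  exact mem_image.2 ⟨_, mem_filter.2 ⟨mem_range.2 (by omega), hjS⟩, hfj⟩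

end PathPow

end GrundyDom

open GrundyDom Finset

theorem stmt5_general (n m t : ℕ) (ht1 : m + 1 ≤ t) (ht2 : t ≤ n) :
    (∀ (i : ZMod n) (S : List (ZMod n)), IsLegal (cyclePow n m) S →
      selfFoot (cyclePow n m) S ∩
          ↑((Finset.range (t + 1)).image (fun s : ℕ => i + (s : ZMod n)))
        = {i, i + (t : ZMod n)} →
      (S.toFinset ∩ (Finset.range t).image (fun s : ℕ => i + (s : ZMod n))).card ≤ t - m)
    ∧
    (∀ (i : Fin n) (S : List (Fin n)), i.val + t ≤ n - 1 →
      IsLegal (pathPow n m) S →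
      selfFoot (pathPow n m) S ∩ {j : Fin n | i.val ≤ j.val ∧ j.val ≤ i.val + t}
        = {j : Fin n | j = i ∨ j.val = i.val + t} →
      (S.toFinset.filter (fun j => i.val ≤ j.val ∧ j.val < i.val + t)).card ≤ t - m) :=
  ⟨fun i _ hS hI => cyclePow_card_inter_image_le ht1 ht2 i hS hI,
    fun i _ hit hS hI => pathPow_card_filter_le ht1 i (by omega) hS hI⟩

/-- Lemma on powers of cycles and paths: if `S` is a legal dominating
sequence of `C_n^m` (resp. `P_n^m`) whose self-footprinting set intersects the interval
`[i, i+t]` exactly in `{i, i+t}` (with `m+1 ≤ t ≤ n`), then `|Ŝ ∩ [i, i+t)| ≤ t - m`.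
For the path power, vertices are `0`-based: vertex `j : Fin n` represents `j+1 ∈ [n]`. -/
theorem stmt5 (n m t : ℕ) (hm : 1 ≤ m) (ht1 : m + 1 ≤ t) (ht2 : t ≤ n) :
    (∀ (i : ZMod n) (S : List (ZMod n)), IsLegal (cyclePow n m) S →
      selfFoot (cyclePow n m) S ∩
          ↑((Finset.range (t + 1)).image (fun s : ℕ => i + (s : ZMod n)))
        = {i, i + (t : ZMod n)} →
      (S.toFinset ∩ (Finset.range t).image (fun s : ℕ => i + (s : ZMod n))).card ≤ t - m)
    ∧
    (∀ (i : Fin n) (S : List (Fin n)), i.val + t ≤ n - 1 →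
      IsLegal (pathPow n m) S →
      selfFoot (pathPow n m) S ∩ {j : Fin n | i.val ≤ j.val ∧ j.val ≤ i.val + t}
        = {j : Fin n | j = i ∨ j.val = i.val + t} →
      (S.toFinset.filter (fun j => i.val ≤ j.val ∧ j.val < i.val + t)).card ≤ t - m) :=
  stmt5_general n m t ht1 ht2
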